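/- Fix a > 0 and define T : W^{1,1}(ℝ²) → ℝ by Tf := ∫_{Q(0,1,1)} f(x) dx + ∫_{ℝ²} g(x)·∇f(x) dx, where D := (Q(0,1+2a,1) ∪ Q(0,1,1+2a)) \ Q(0,1,1) and g(x) := −(sign(x₁)·χ_{{|x₁|>|x₂|}}(x), sign(x₂)·χ_{{|x₂|>|x₁|}}(x))·χ_D(x). Then for every h ∈ W^{1,1}(ℝ²) one has ‖∇h‖_{L¹(Q(0,1,1))} ≤ ‖h‖_{L¹(ℝ²)} + ‖∇h‖_{L¹(ℝ²)} − Th. -/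

import Mathlib

open MeasureTheory Set
open scoped RealInnerProductSpace

noncomputable section

/-- The open box `Q(c, r₁, r₂) = {y : |y₁ - c₁| < r₁/2, |y₂ - c₂| < r₂/2}` in `ℝ²`. -/
def Qset (c : EuclideanSpace ℝ (Fin 2)) (r₁ r₂ : ℝ) : Set (EuclideanSpace ℝ (Fin 2)) :=
  {y | |y 0 - c 0| < r₁ / 2 ∧ |y 1 - c 1| < r₂ / 2}

/-- The frame `D = (Q(0,1+2a,1) ∪ Q(0,1,1+2a)) \ Q(0,1,1)`. -/
def Dset (a : ℝ) : Set (EuclideanSpace ℝ (Fin 2)) :=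
  (Qset 0 (1 + 2 * a) 1 ∪ Qset 0 1 (1 + 2 * a)) \ Qset 0 1 1

/-- The vector field
`g(x) = -(sign(x₁)·χ_{|x₁|>|x₂|}(x), sign(x₂)·χ_{|x₂|>|x₁|}(x))·χ_D(x)`. -/
def gfield (a : ℝ) : EuclideanSpace ℝ (Fin 2) → EuclideanSpace ℝ (Fin 2) :=
  (Dset a).indicator fun x => WithLp.toLp 2 fun i =>
    if i = 0 then -(Real.sign (x 0) * if |x 1| < |x 0| then 1 else 0)
    else -(Real.sign (x 1) * if |x 0| < |x 1| then 1 else 0)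

/-- The divergence of a vector field `φ : ℝ² → ℝ²`. -/
def divergence (φ : EuclideanSpace ℝ (Fin 2) → EuclideanSpace ℝ (Fin 2))
    (x : EuclideanSpace ℝ (Fin 2)) : ℝ :=
  ∑ i : Fin 2, fderiv ℝ φ x (EuclideanSpace.single i 1) i

/-- `gf` is a weak (distributional) gradient of `f`, with both `f` and `gf` integrable:
`∫ f div φ = - ∫ gf ⬝ φ` for all test functions `φ ∈ C_c¹(ℝ²; ℝ²)`. -/
def IsWeakGradPair (f : EuclideanSpace ℝ (Fin 2) → ℝ)
    (gf : EuclideanSpace ℝ (Fin 2) → EuclideanSpace ℝ (Fin 2)) : Prop :=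
  Integrable f ∧ Integrable gf ∧
  ∀ φ : EuclideanSpace ℝ (Fin 2) → EuclideanSpace ℝ (Fin 2),
    ContDiff ℝ 1 φ → HasCompactSupport φ →
      ∫ x, f x * divergence φ x = - ∫ x, ⟪gf x, φ x⟫

/-- The functional `T f = ∫_{Q(0,1,1)} f + ∫_{ℝ²} g·∇f`, expressed on a function `f`
together with its weak gradient `gf`. -/
def Tfun (a : ℝ) (f : EuclideanSpace ℝ (Fin 2) → ℝ)
    (gf : EuclideanSpace ℝ (Fin 2) → EuclideanSpace ℝ (Fin 2)) : ℝ :=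
  (∫ x in Qset 0 1 1, f x) + ∫ x, ⟪gfield a x, gf x⟫

lemma abs_real_sign_le_one (r : ℝ) : |Real.sign r| ≤ 1 := by
  rcases Real.sign_apply_eq r with h | h | h <;> rw [h] <;> norm_num

lemma continuous_eval (i : Fin 2) : Continuous fun y : EuclideanSpace ℝ (Fin 2) => y i :=
  (EuclideanSpace.proj i : EuclideanSpace ℝ (Fin 2) →L[ℝ] ℝ).continuous

lemma isOpen_Qset (c : EuclideanSpace ℝ (Fin 2)) (r₁ r₂ : ℝ) : IsOpen (Qset c r₁ r₂) := by
  have h1 : IsOpen {y : EuclideanSpace ℝ (Fin 2) | |y 0 - c 0| < r₁ / 2} :=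
    isOpen_lt (((continuous_eval 0).sub continuous_const).abs) continuous_const
  have h2 : IsOpen {y : EuclideanSpace ℝ (Fin 2) | |y 1 - c 1| < r₂ / 2} :=
    isOpen_lt (((continuous_eval 1).sub continuous_const).abs) continuous_const
  exact h1.inter h2

lemma measurableSet_Dset (a : ℝ) : MeasurableSet (Dset a) :=
  (((isOpen_Qset _ _ _).union (isOpen_Qset _ _ _)).measurableSet).diff
    (isOpen_Qset _ _ _).measurableSet

lemma measurable_sign : Measurable Real.sign := by
  have : Real.sign = fun r => if r < 0 then (-1 : ℝ) else if 0 < r then 1 else 0 := by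
    funext r; rfl
  rw [this]
  exact Measurable.ite (measurableSet_lt measurable_id measurable_const) measurable_const
    (Measurable.ite (measurableSet_lt measurable_const measurable_id) measurable_const
      measurable_const)

lemma measurable_gfield (a : ℝ) : Measurable (gfield a) := by
  apply Measurable.indicator _ (measurableSet_Dset a)
  refine (WithLp.measurable_toLp 2 _).comp ?_
  apply measurable_pi_lambda
  intro i
  by_cases hi : i = 0
  · simp only [hi, if_pos rfl]
    have hs : Measurable fun x : EuclideanSpace ℝ (Fin 2) => Real.sign (x 0) :=
      measurable_sign.comp (continuous_eval 0).measurable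
    have hite : Measurable fun x : EuclideanSpace ℝ (Fin 2) =>
        (if |x 1| < |x 0| then (1 : ℝ) else 0) :=
      Measurable.ite ((isOpen_lt (continuous_eval 1).abs (continuous_eval 0).abs).measurableSet)
        measurable_const measurable_const
    exact (hs.mul hite).neg
  · simp only [if_neg hi]
    have hs : Measurable fun x : EuclideanSpace ℝ (Fin 2) => Real.sign (x 1) :=
      measurable_sign.comp (continuous_eval 1).measurable
    have hite : Measurable fun x : EuclideanSpace ℝ (Fin 2) =>
        (if |x 0| < |x 1| then (1 : ℝ) else 0) :=
      Measurable.ite ((isOpen_lt (continuous_eval 0).abs (continuous_eval 1).abs).measurableSet)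
        measurable_const measurable_const
    exact (hs.mul hite).neg

lemma norm_le_one_of (v : EuclideanSpace ℝ (Fin 2)) (h0 : |v 0| ≤ 1) (h1 : |v 1| ≤ 1)
    (hz : v 0 = 0 ∨ v 1 = 0) : ‖v‖ ≤ 1 := by
  rw [EuclideanSpace.norm_eq, Real.sqrt_le_one, Fin.sum_univ_two, Real.norm_eq_abs,
    Real.norm_eq_abs]
  rcases hz with hz | hz <;> rw [hz] <;> simp only [abs_zero] <;>
    nlinarith [abs_nonneg (v 0), abs_nonneg (v 1)]

lemma gfield_norm_le (a : ℝ) (x : EuclideanSpace ℝ (Fin 2)) : ‖gfield a x‖ ≤ 1 := by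
  unfold gfield
  by_cases hx : x ∈ Dset a
  · rw [Set.indicator_of_mem hx]
    set v : EuclideanSpace ℝ (Fin 2) := WithLp.toLp 2 fun i =>
      if i = 0 then -(Real.sign (x 0) * if |x 1| < |x 0| then 1 else 0)
      else -(Real.sign (x 1) * if |x 0| < |x 1| then 1 else 0) with hv
    have e0 : v 0 = -(Real.sign (x 0) * if |x 1| < |x 0| then 1 else 0) := by rw [hv, WithLp.ofLp_toLp]; exact if_pos rfl
    have e1 : v 1 = -(Real.sign (x 1) * if |x 0| < |x 1| then 1 else 0) :=
      by rw [hv, WithLp.ofLp_toLp]; exact if_neg (by norm_num)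
    apply norm_le_one_of
    · rw [e0, abs_neg, abs_mul]
      have := abs_real_sign_le_one (x 0)
      split <;> simp <;> linarith
    · rw [e1, abs_neg, abs_mul]
      have := abs_real_sign_le_one (x 1)
      split <;> simp <;> linarith
    · rcases lt_trichotomy |x 0| |x 1| with hlt | heq | hgt
      · left; rw [e0, if_neg (by linarith), mul_zero, neg_zero]
      · left; rw [e0, if_neg (by rw [heq]; exact lt_irrefl _), mul_zero, neg_zero]
      · right; rw [e1, if_neg (by linarith), mul_zero, neg_zero]
  · rw [Set.indicator_of_notMem hx]
    simp

lemma gfield_eq_zero_on_Q (a : ℝ) {x : EuclideanSpace ℝ (Fin 2)} (hx : x ∈ Qset 0 1 1) :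
    gfield a x = 0 := by
  unfold gfield
  have : x ∉ Dset a := fun hD => hD.2 hx
  rw [Set.indicator_of_notMem this]

/-- For every `h ∈ W^{1,1}(ℝ²)`:
`‖∇h‖_{L¹(Q(0,1,1))} ≤ ‖h‖_{L¹(ℝ²)} + ‖∇h‖_{L¹(ℝ²)} - T h`. -/
theorem grad_on_square_le_norm_sub_functional (a : ℝ) (ha : 0 < a)
    (h : EuclideanSpace ℝ (Fin 2) → ℝ)
    (gh : EuclideanSpace ℝ (Fin 2) → EuclideanSpace ℝ (Fin 2))
    (hWG : IsWeakGradPair h gh) :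
    (∫ x in Qset 0 1 1, ‖gh x‖) ≤ (∫ x, |h x|) + (∫ x, ‖gh x‖) - Tfun a h gh := by
  obtain ⟨hh, hgh, -⟩ := hWG
  have hQm : MeasurableSet (Qset 0 1 1) := (isOpen_Qset 0 1 1).measurableSet
  -- first piece: ∫_Q h ≤ ∫ |h|
  have h1 : (∫ x in Qset 0 1 1, h x) ≤ ∫ x, |h x| := by
    have ha1 : (∫ x in Qset 0 1 1, h x) ≤ ∫ x in Qset 0 1 1, |h x| :=
      integral_mono hh.restrict hh.abs.restrict fun x => le_abs_self _
    have ha2 : (∫ x in Qset 0 1 1, |h x|) ≤ ∫ x, |h x| :=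
      setIntegral_le_integral hh.abs (Filter.Eventually.of_forall fun x => abs_nonneg _)
    linarith
  -- integrability of the inner product
  have hinner_int : Integrable fun x => ⟪gfield a x, gh x⟫ := by
    apply Integrable.mono hgh.norm
      ((measurable_gfield a).aestronglyMeasurable.inner hgh.aestronglyMeasurable)
    filter_upwards with x
    rw [Real.norm_eq_abs, norm_norm]
    calc |⟪gfield a x, gh x⟫| ≤ ‖gfield a x‖ * ‖gh x‖ := abs_real_inner_le_norm _ _
      _ ≤ 1 * ‖gh x‖ := by
          exact mul_le_mul_of_nonneg_right (gfield_norm_le a x) (norm_nonneg _)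
      _ = ‖gh x‖ := one_mul _
  -- second piece: ∫ ⟪g, gh⟫ ≤ ∫_{Qᶜ} ‖gh‖
  have h2 : (∫ x, ⟪gfield a x, gh x⟫) ≤
      ∫ x, (Qset 0 1 1)ᶜ.indicator (fun y => ‖gh y‖) x := by
    apply integral_mono hinner_int (hgh.norm.indicator hQm.compl)
    intro x
    show ⟪gfield a x, gh x⟫ ≤ (Qset 0 1 1)ᶜ.indicator (fun y => ‖gh y‖) x
    by_cases hx : x ∈ Qset 0 1 1
    · rw [gfield_eq_zero_on_Q a hx]
      have : x ∉ (Qset 0 1 1)ᶜ := by simpa using hx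
      rw [Set.indicator_of_notMem this]
      simp
    · rw [Set.indicator_of_mem (by simpa using hx)]
      calc ⟪gfield a x, gh x⟫ ≤ ‖gfield a x‖ * ‖gh x‖ := real_inner_le_norm _ _
        _ ≤ 1 * ‖gh x‖ := mul_le_mul_of_nonneg_right (gfield_norm_le a x) (norm_nonneg _)
        _ = ‖gh x‖ := one_mul _
  rw [integral_indicator hQm.compl] at h2
  have h3 : (∫ x in Qset 0 1 1, ‖gh x‖) + (∫ x in (Qset 0 1 1)ᶜ, ‖gh x‖) = ∫ x, ‖gh x‖ :=
    integral_add_compl hQm hgh.norm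
  unfold Tfun
  linarith
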